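/- Let C > 0 be fixed. Then, as ℓ → ∞, ∫_{C/ℓ}^{π/2} (16/(ℓ⁴(ℓ+1)⁴)) P_ℓ'(cos θ)⁴ sin θ dθ = O(1/ℓ²); that is, there exist K > 0 and ℓ₀ ∈ ℕ such that for all integers ℓ ≥ ℓ₀ the absolute value of this integral is at most K/ℓ². -/

import Mathlib

open Real intervalIntegral

/-- The `n`-th Legendre polynomial via Rodrigues' formula:
`P_n(t) = (1/(2^n n!)) dⁿ/dtⁿ (t² − 1)ⁿ`. -/
noncomputable def legendreP (n : ℕ) (t : ℝ) : ℝ :=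
  (1 / ((2 : ℝ) ^ n * (n.factorial : ℝ))) *
    iteratedDeriv n (fun s : ℝ => (s ^ 2 - 1) ^ n) t

/-!
Write `ν = ℓ(ℓ + 1)`. The substitution `x = cos θ` turns the integral into
`∫₀^{cos(C/ℓ)} (2P_ℓ'/ν)⁴ dx`, and `cos(C/ℓ) ≥ 0` once `ℓ ≥ |C|`. Since `|2P_ℓ'/ν| ≤ 1` on `[-1, 1]`,
this is at most `∫_{-1}^1 (2P_ℓ'/ν)² = 4/ν ≤ 4/ℓ²`. The two facts used are classical:
* `|P_ℓ'| ≤ ν/2 = P_ℓ'(1)` on `[-1, 1]`: the energy `(ν - 2) P_ℓ'² + (1 - x²) P_ℓ''²` has derivative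
  `6x P_ℓ''²` (by the Legendre equation), so it is largest at `±1`;
* `∫_{-1}^1 P_ℓ'² = ν`: integrating by parts leaves `[P_ℓ P_ℓ']_{-1}^1 = ν` and `∫ P_ℓ'' P_ℓ = 0`,
  as `P_ℓ` is orthogonal to polynomials of degree `< ℓ` (integrate by parts `ℓ` times in
  Rodrigues' formula).
-/

open Polynomial

noncomputable def rodrigues (n : ℕ) : ℝ[X] := (X ^ 2 - 1) ^ n

lemma rodrigues_eq_mul (n : ℕ) : rodrigues n = (X - C 1) ^ n * (X - C (-1)) ^ n := by
  rw [rodrigues, ← mul_pow]; congr 1; simp only [map_one, map_neg]; ring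

lemma eval_one_iterate_derivative_rodrigues (n : ℕ) :
    (derivative^[n] (rodrigues n)).eval 1 = n.factorial * 2 ^ n := by
  have := aeval_iterate_derivative_self (rodrigues n) n (1 : ℝ) (p' := (X - C (-1)) ^ n)
    (by rw [Algebra.algebraMap_self, Polynomial.map_id, rodrigues_eq_mul])
  rw [coe_aeval_eq_eval] at this
  rw [this, nsmul_eq_mul, eval_pow]
  norm_num

lemma eval_neg_one_iterate_derivative_rodrigues (n : ℕ) :
    (derivative^[n] (rodrigues n)).eval (-1) = n.factorial * (-2) ^ n := by
  have := aeval_iterate_derivative_self (rodrigues n) n (-1 : ℝ) (p' := (X - C 1) ^ n)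
    (by rw [Algebra.algebraMap_self, Polynomial.map_id, rodrigues_eq_mul, mul_comm])
  rw [coe_aeval_eq_eval] at this
  rw [this, nsmul_eq_mul, eval_pow]
  norm_num

lemma eval_iterate_derivative_rodrigues_eq_zero {n k : ℕ} (hk : k < n) {x : ℝ} (hx : x ^ 2 = 1) :
    (derivative^[k] (rodrigues n)).eval x = 0 := by
  obtain ⟨q, hq⟩ := pow_sub_dvd_iterate_derivative_pow ((X : ℝ[X]) ^ 2 - 1) n k
  rw [rodrigues, hq, eval_mul, eval_pow]
  simp [hx, Nat.sub_ne_zero_of_lt hk]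

/-- The `(m + 1)`-st derivative of `(X² - 1) W' = 2n X W` for `W = (X² - 1)ⁿ`. -/
lemma rodrigues_recurrence (n m : ℕ) :
    (X ^ 2 - 1) * derivative^[m + 2] (rodrigues n)
      + 2 * ((m : ℝ[X]) + 1 - (n : ℝ[X])) * X * derivative^[m + 1] (rodrigues n)
      + ((m : ℝ[X]) + 1) * ((m : ℝ[X]) - 2 * (n : ℝ[X])) * derivative^[m] (rodrigues n) = 0 := by
  induction m with
  | zero =>
    have hbase : (X ^ 2 - 1) * derivative (rodrigues n) - 2 * (n : ℝ[X]) * X * rodrigues n = 0 := by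
      cases n with
      | zero => simp [rodrigues]
      | succ n =>
        rw [rodrigues, derivative_pow_succ, derivative_sub, derivative_X_sq, derivative_one,
          C_ofNat, ← C_eq_natCast, Nat.cast_succ]
        ring
    have := congrArg derivative hbase
    simp only [derivative_mul, derivative_sub, derivative_X_sq, derivative_one, derivative_X,
      derivative_natCast, derivative_ofNat, derivative_zero, C_ofNat] at this
    simp only [Function.iterate_succ_apply', Function.iterate_zero_apply, Nat.cast_zero]
    linear_combination this
  | succ m ih =>
    have := congrArg derivative ih
    simp only [derivative_mul, derivative_sub, derivative_add, derivative_X_sq, derivative_one,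
      derivative_X, derivative_natCast, derivative_ofNat, derivative_zero, C_ofNat,
      ← Function.iterate_succ_apply' derivative] at this
    push_cast
    linear_combination this

noncomputable def legendrePoly (n : ℕ) : ℝ[X] :=
  C (1 / (2 ^ n * n.factorial : ℝ)) * derivative^[n] (rodrigues n)

lemma legendreP_eq_eval (n : ℕ) : legendreP n = fun t => (legendrePoly n).eval t := by
  have hpoly : ∀ k, iteratedDeriv k (fun s : ℝ => (s ^ 2 - 1) ^ n)
      = fun t => (derivative^[k] (rodrigues n)).eval t := by
    intro k
    induction k with
    | zero => ext t; simp [rodrigues]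
    | succ k ih =>
      ext t
      rw [iteratedDeriv_succ, ih, Function.iterate_succ_apply', Polynomial.deriv]
  ext t
  rw [legendreP, hpoly, legendrePoly, eval_mul, eval_C]

lemma deriv_legendreP (n : ℕ) (t : ℝ) :
    deriv (legendreP n) t = (derivative (legendrePoly n)).eval t := by
  rw [legendreP_eq_eval, Polynomial.deriv]

lemma legendrePoly_eval_one (n : ℕ) : (legendrePoly n).eval 1 = 1 := by
  rw [legendrePoly, eval_mul, eval_C, eval_one_iterate_derivative_rodrigues]
  field_simp

lemma legendrePoly_eval_neg_one (n : ℕ) : (legendrePoly n).eval (-1) = (-1) ^ n := by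
  rw [legendrePoly, eval_mul, eval_C, eval_neg_one_iterate_derivative_rodrigues, neg_pow 2]
  field_simp

lemma legendrePoly_ode (n : ℕ) :
    (1 - X ^ 2) * derivative (derivative (legendrePoly n)) - 2 * X * derivative (legendrePoly n)
      + (n * (n + 1) : ℝ[X]) * legendrePoly n = 0 := by
  have h := congrArg (C (1 / (2 ^ n * n.factorial : ℝ)) * ·) (rodrigues_recurrence n n)
  simp only [Function.iterate_succ_apply'] at h
  simp only [legendrePoly, derivative_C_mul]
  linear_combination -h

lemma legendrePoly_ode_derivative (n : ℕ) :
    (1 - X ^ 2) * derivative^[3] (legendrePoly n) - 4 * X * derivative^[2] (legendrePoly n)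
      + (n * (n + 1) - 2 : ℝ[X]) * derivative (legendrePoly n) = 0 := by
  have h := congrArg derivative (legendrePoly_ode n)
  simp only [derivative_mul, derivative_sub, derivative_add, derivative_X_sq, derivative_one,
    derivative_X, derivative_natCast, derivative_ofNat, derivative_zero, C_ofNat] at h
  simp only [Function.iterate_succ_apply', Function.iterate_zero_apply]
  linear_combination h

lemma derivative_legendrePoly_eval_one (n : ℕ) :
    (derivative (legendrePoly n)).eval 1 = n * (n + 1) / 2 := by
  have h := congrArg (eval 1) (legendrePoly_ode n)
  simp only [eval_add, eval_sub, eval_mul, eval_pow, eval_X, eval_one, eval_ofNat, eval_natCast,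
    legendrePoly_eval_one, eval_zero] at h
  linear_combination -h / 2

lemma derivative_legendrePoly_eval_neg_one (n : ℕ) :
    (derivative (legendrePoly n)).eval (-1) = (-1) ^ (n + 1) * (n * (n + 1) / 2) := by
  have h := congrArg (eval (-1)) (legendrePoly_ode n)
  simp only [eval_add, eval_sub, eval_mul, eval_pow, eval_X, eval_one, eval_ofNat, eval_natCast,
    legendrePoly_eval_neg_one, eval_zero] at h
  linear_combination h / 2

noncomputable def legendreEnergy (n : ℕ) : ℝ[X] :=
  (n * (n + 1) - 2 : ℝ[X]) * derivative (legendrePoly n) ^ 2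
    + (1 - X ^ 2) * derivative^[2] (legendrePoly n) ^ 2

lemma legendreEnergy_eval (n : ℕ) (x : ℝ) :
    (legendreEnergy n).eval x = (n * (n + 1) - 2) * (derivative (legendrePoly n)).eval x ^ 2
      + (1 - x ^ 2) * (derivative^[2] (legendrePoly n)).eval x ^ 2 := by
  simp only [legendreEnergy, eval_add, eval_sub, eval_mul, eval_pow, eval_X, eval_one, eval_ofNat,
    eval_natCast]

lemma derivative_legendreEnergy (n : ℕ) :
    derivative (legendreEnergy n) = 6 * X * derivative^[2] (legendrePoly n) ^ 2 := by
  have h := legendrePoly_ode_derivative n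
  simp only [legendreEnergy, Function.iterate_succ_apply', Function.iterate_zero_apply] at h ⊢
  simp only [derivative_mul, derivative_sub, derivative_add, derivative_sq, derivative_X,
    derivative_one, derivative_natCast, derivative_ofNat, C_ofNat] at h ⊢
  linear_combination 2 * derivative (derivative (legendrePoly n)) * h

lemma le_max_of_mul_deriv_nonneg {f : ℝ → ℝ} (hf : Differentiable ℝ f)
    (hf' : ∀ x, 0 ≤ x * deriv f x) {a b x : ℝ} (hx : x ∈ Set.Icc a b) :
    f x ≤ max (f a) (f b) := by
  rcases le_total 0 x with h0 | h0
  · have hmono : MonotoneOn f (Set.Ici 0) :=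
      monotoneOn_of_deriv_nonneg (convex_Ici 0) hf.continuous.continuousOn hf.differentiableOn
        fun y hy => by
          rw [interior_Ici] at hy
          exact nonneg_of_mul_nonneg_right (hf' y) hy
    exact (hmono h0 (h0.trans hx.2) hx.2).trans (le_max_right _ _)
  · have hanti : AntitoneOn f (Set.Iic 0) :=
      antitoneOn_of_deriv_nonpos (convex_Iic 0) hf.continuous.continuousOn hf.differentiableOn
        fun y hy => by
          rw [interior_Iic] at hy
          exact nonpos_of_mul_nonneg_right (hf' y) hy
    exact (hanti (hx.1.trans h0) h0 hx.1).trans (le_max_left _ _)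

lemma abs_derivative_legendrePoly_eval_le {n : ℕ} (hn : 2 ≤ n) {x : ℝ} (hx : x ∈ Set.Icc (-1) 1) :
    |(derivative (legendrePoly n)).eval x| ≤ n * (n + 1) / 2 := by
  have hE' : ∀ y, 0 ≤ y * deriv (fun y => (legendreEnergy n).eval y) y := fun y => by
    rw [Polynomial.deriv, derivative_legendreEnergy]
    simp only [eval_mul, eval_pow, eval_X, eval_ofNat]
    nlinarith [sq_nonneg (y * (derivative^[2] (legendrePoly n)).eval y)]
  have hmax := le_max_of_mul_deriv_nonneg (legendreEnergy n).differentiable hE' hx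
  have hEnd : ∀ y : ℝ, y ^ 2 = 1 →
      (derivative (legendrePoly n)).eval y ^ 2 = (n * (n + 1) / 2) ^ 2 →
      (legendreEnergy n).eval y = (n * (n + 1) - 2) * (n * (n + 1) / 2) ^ 2 := fun y hy hy' => by
    rw [legendreEnergy_eval, hy, hy', sub_self, zero_mul, add_zero]
  rw [hEnd 1 (one_pow 2) (by rw [derivative_legendrePoly_eval_one]),
    hEnd (-1) neg_one_sq (by rw [derivative_legendrePoly_eval_neg_one, mul_pow, ← pow_mul,
      pow_mul', neg_one_sq, one_pow, one_mul]), max_self, legendreEnergy_eval] at hmax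
  have hn' : (2 : ℝ) ≤ n := by exact_mod_cast hn
  have hx2 : x ^ 2 ≤ 1 := by nlinarith [hx.1, hx.2]
  refine abs_le_of_sq_le_sq ?_ (by positivity)
  refine le_of_mul_le_mul_left ?_ (show (0 : ℝ) < n * (n + 1) - 2 by nlinarith)
  nlinarith [mul_nonneg (sub_nonneg.2 hx2) (sq_nonneg ((derivative^[2] (legendrePoly n)).eval x))]

lemma natDegree_legendrePoly_le (n : ℕ) : (legendrePoly n).natDegree ≤ n := by
  have hrod : (rodrigues n).natDegree ≤ 2 * n := by
    have hquad : ((X : ℝ[X]) ^ 2 - 1).natDegree ≤ 2 := by compute_degree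
    exact natDegree_pow_le.trans (by nlinarith)
  refine (natDegree_C_mul_le _ _).trans ((natDegree_iterate_derivative _ _).trans ?_)
  omega

lemma integral_mul_iterate_derivative_rodrigues {n k : ℕ} (hk : k ≤ n) (p : ℝ[X]) :
    ∫ x in (-1 : ℝ)..1, p.eval x * (derivative^[k] (rodrigues n)).eval x
      = (-1) ^ k * ∫ x in (-1 : ℝ)..1, (derivative^[k] p).eval x * (rodrigues n).eval x := by
  induction k generalizing p with
  | zero => simp
  | succ k ih =>
    have hparts := integral_mul_deriv_eq_deriv_mul (a := -1) (b := 1)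
      (fun x _ => p.hasDerivAt x)
      (fun x _ => by
        rw [Function.iterate_succ_apply']; exact (derivative^[k] (rodrigues n)).hasDerivAt x)
      ((derivative p).continuous.intervalIntegrable _ _)
      ((derivative^[k + 1] (rodrigues n)).continuous.intervalIntegrable _ _)
    have hk' : k < n := hk
    rw [hparts, eval_iterate_derivative_rodrigues_eq_zero hk' (one_pow 2),
      eval_iterate_derivative_rodrigues_eq_zero hk' neg_one_sq, ih hk'.le,
      Function.iterate_succ_apply]
    ring

lemma integral_mul_legendrePoly_eq_zero {n : ℕ} {p : ℝ[X]} (hp : derivative^[n] p = 0) :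
    ∫ x in (-1 : ℝ)..1, p.eval x * (legendrePoly n).eval x = 0 := by
  simp only [legendrePoly, eval_mul, eval_C, mul_left_comm _ (1 / _ : ℝ),
    intervalIntegral.integral_const_mul, integral_mul_iterate_derivative_rodrigues le_rfl, hp,
    eval_zero, zero_mul, intervalIntegral.integral_zero, mul_zero]

lemma integral_derivative_legendrePoly_sq (n : ℕ) :
    ∫ x in (-1 : ℝ)..1, (derivative (legendrePoly n)).eval x ^ 2 = n * (n + 1) := by
  have hparts := integral_mul_deriv_eq_deriv_mul (a := -1) (b := 1)
    (fun x _ => (derivative (legendrePoly n)).hasDerivAt x)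
    (fun x _ => (legendrePoly n).hasDerivAt x)
    ((derivative (derivative (legendrePoly n))).continuous.intervalIntegrable _ _)
    ((derivative (legendrePoly n)).continuous.intervalIntegrable _ _)
  have horth : ∫ x in (-1 : ℝ)..1,
      (derivative (derivative (legendrePoly n))).eval x * (legendrePoly n).eval x = 0 := by
    refine integral_mul_legendrePoly_eq_zero ?_
    rw [← Function.iterate_succ_apply derivative, ← Function.iterate_succ_apply derivative]
    exact iterate_derivative_eq_zero ((natDegree_legendrePoly_le n).trans_lt (by omega))
  simp only [sq, hparts, horth, derivative_legendrePoly_eval_one,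
    derivative_legendrePoly_eval_neg_one, legendrePoly_eval_one, legendrePoly_eval_neg_one]
  have hsign : (-1 : ℝ) ^ n * (-1) ^ n = 1 := by rw [← mul_pow]; norm_num
  linear_combination (n * (n + 1) / 2 : ℝ) * hsign

lemma integral_comp_cos_mul_sin {g : ℝ → ℝ} (hg : Continuous g) (a b : ℝ) :
    ∫ θ in a..b, g (cos θ) * sin θ = ∫ x in cos b..cos a, g x := by
  have h := integral_comp_mul_deriv (fun θ _ => hasDerivAt_cos θ) continuous_sin.neg.continuousOn hg
    (a := a) (b := b)
  rw [intervalIntegral.integral_symm (cos a) (cos b), ← h, ← intervalIntegral.integral_neg]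
  simp only [Function.comp_apply, mul_neg, neg_neg]

lemma abs_integral_comp_cos_pow_four_mul_sin_le {u : ℝ → ℝ} (hu : Continuous u)
    (hu1 : ∀ x ∈ Set.Icc (-1 : ℝ) 1, |u x| ≤ 1) {a : ℝ} (ha : 0 ≤ cos a) :
    |∫ θ in a..π / 2, u (cos θ) ^ 4 * sin θ| ≤ ∫ x in (-1 : ℝ)..1, u x ^ 2 := by
  have hsub := integral_comp_cos_mul_sin (g := fun x => u x ^ 4) (hu.pow 4) a (π / 2)
  rw [cos_pi_div_two] at hsub
  rw [hsub, abs_of_nonneg (intervalIntegral.integral_nonneg ha fun x _ => by positivity)]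
  calc ∫ x in (0 : ℝ)..cos a, u x ^ 4 ≤ ∫ x in (0 : ℝ)..cos a, u x ^ 2 := by
        refine intervalIntegral.integral_mono_on ha ((hu.pow 4).intervalIntegrable _ _)
          ((hu.pow 2).intervalIntegrable _ _) fun x hx => ?_
        have hx1 : |u x| ≤ 1 := hu1 x ⟨by linarith [hx.1], hx.2.trans (cos_le_one a)⟩
        have : u x ^ 2 ≤ 1 := by rw [← sq_abs]; nlinarith [abs_nonneg (u x)]
        nlinarith [sq_nonneg (u x)]
    _ ≤ ∫ x in (-1 : ℝ)..1, u x ^ 2 :=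
        intervalIntegral.integral_mono_interval (by norm_num) ha (cos_le_one a)
          (Filter.Eventually.of_forall fun x => sq_nonneg (u x)) ((hu.pow 2).intervalIntegrable _ _)

theorem legendre_deriv_fourth_small_general (C : ℝ) :
    ∃ K > 0, ∃ ℓ₀ : ℕ, ∀ ℓ : ℕ, ℓ₀ ≤ ℓ →
      |∫ θ in (C / (ℓ : ℝ))..(π / 2),
          (16 / ((ℓ : ℝ) ^ 4 * ((ℓ : ℝ) + 1) ^ 4)) *
            (deriv (legendreP ℓ) (Real.cos θ)) ^ 4 * Real.sin θ| ≤ K / (ℓ : ℝ) ^ 2 := by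
  refine ⟨4, by norm_num, max 2 ⌈|C|⌉₊, fun ℓ hℓ => ?_⟩
  have hℓ2 : 2 ≤ ℓ := le_of_max_le_left hℓ
  have hCℓ : |C| ≤ ℓ := (Nat.le_ceil _).trans (by exact_mod_cast le_of_max_le_right hℓ)
  have hℓpos : (0 : ℝ) < ℓ := by positivity
  set ν : ℝ := ℓ * (ℓ + 1)
  have hν : 0 < ν := by positivity
  set u : ℝ → ℝ := fun x => (derivative (legendrePoly ℓ)).eval x / (ν / 2)
  have hu1 : ∀ x ∈ Set.Icc (-1 : ℝ) 1, |u x| ≤ 1 := fun x hx => by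
    rw [abs_div, abs_of_pos (half_pos hν), div_le_one (half_pos hν)]
    exact abs_derivative_legendrePoly_eval_le hℓ2 hx
  have hu2 : ∫ x in (-1 : ℝ)..1, u x ^ 2 = 4 / ν := by
    simp only [u, div_pow, intervalIntegral.integral_div, integral_derivative_legendrePoly_sq]
    field_simp; ring
  have hcos : 0 ≤ cos (C / ℓ) := by
    refine cos_nonneg_of_mem_Icc (abs_le.mp ?_)
    rw [abs_div, Nat.abs_cast, div_le_iff₀ hℓpos]
    nlinarith [pi_gt_three]
  have hintegrand : ∀ θ, (16 / ((ℓ : ℝ) ^ 4 * ((ℓ : ℝ) + 1) ^ 4)) *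
      (deriv (legendreP ℓ) (cos θ)) ^ 4 * sin θ = u (cos θ) ^ 4 * sin θ := fun θ => by
    simp only [deriv_legendreP, u, ν]; field_simp; ring
  simp only [hintegrand]
  calc _ ≤ 4 / ν := hu2 ▸ abs_integral_comp_cos_pow_four_mul_sin_le (by fun_prop) hu1 hcos
    _ ≤ 4 / (ℓ : ℝ) ^ 2 := by gcongr; nlinarith

theorem legendre_deriv_fourth_small (C : ℝ) (hC : 0 < C) :
    ∃ K > 0, ∃ ℓ₀ : ℕ, ∀ ℓ : ℕ, ℓ₀ ≤ ℓ →
      |∫ θ in (C / (ℓ : ℝ))..(π / 2),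
          (16 / ((ℓ : ℝ) ^ 4 * ((ℓ : ℝ) + 1) ^ 4)) *
            (deriv (legendreP ℓ) (Real.cos θ)) ^ 4 * Real.sin θ| ≤ K / (ℓ : ℝ) ^ 2 :=
  legendre_deriv_fourth_small_general C
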